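/- arXiv:2403.12735 — 4 statements merged into one kernel-verified Lean document; each statement's English description precedes it below -/
import Mathlib

section
/- The functions (m, a, b) defined by m(t) = m₀(T/(T-t))^{(λ/2)ρ₀T}, a(t) = (m(t)/ρ(t))² with ρ(t) = ρ₀T/(T-t), and b(t) = -1/(T-t), satisfy the system m' = λm²/(2√a), a' = 2ab + λm√a, a'b + 2ab' - λm√a·b = 0 on [0,T). -/
/-! With `u = T - t` and `α = λρ₀T/2` the mass is `m = m₀ (T/u)^α`, so `m' = α m / u`, while
`√a = m/ρ = m u/(ρ₀T)`; substituting these into the first two equations reduces them to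
identities. For the third, `b = -1/u` satisfies the Riccati equation `b' = -b²`, so
`a'b + 2ab' - λm√a·b = (a' - λm√a) b - 2ab² = 2ab·b - 2ab² = 0`. -/

open Set Filter

section BlowupProfile

variable {T t : ℝ}

theorem hasDerivAt_div_sub_rpow (α : ℝ) (hT : T ≠ 0) (ht : T - t ≠ 0) :
    HasDerivAt (fun s => (T / (T - s)) ^ α) (α / (T - t) * (T / (T - t)) ^ α) t := by
  have hbase := (hasDerivAt_const t T).fun_div ((hasDerivAt_id' t).const_sub T) ht
  refine (hbase.rpow_const (p := α) (Or.inl (div_ne_zero hT ht))).congr_deriv ?_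
  rw [Real.rpow_sub_one (div_ne_zero hT ht)]
  field_simp
  ring

theorem hasDerivAt_neg_one_div_sub (ht : T - t ≠ 0) :
    HasDerivAt (fun s => -1 / (T - s)) (-(-1 / (T - t)) ^ 2) t :=
  ((hasDerivAt_const t (-1 : ℝ)).div ((hasDerivAt_id' t).const_sub T) ht).congr_deriv
    (by rw [div_pow]; ring)

theorem hasDerivAt_of_eqOn_Iio {f : ℝ → ℝ} (g : ℝ → ℝ) {f' : ℝ} (ht : t < T)
    (hfg : EqOn f g (Iio T)) (hg : HasDerivAt g f' t) : HasDerivAt f f' t :=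
  hg.congr_of_eventuallyEq (eventuallyEq_of_mem (Iio_mem_nhds ht) hfg)

theorem hasDerivAt_sq_mul_sub_div {m : ℝ → ℝ} {m' : ℝ} (c : ℝ) (hm : HasDerivAt m m' t) :
    HasDerivAt (fun s => (m s * (T - s) / c) ^ 2)
      (2 * (m t * (T - t) / c) * ((m' * (T - t) - m t) / c)) t :=
  (((hm.fun_mul ((hasDerivAt_id' t).const_sub T)).div_const c).fun_pow 2).congr_deriv
    (by ring)

end BlowupProfile

theorem explicit_solves_system_general (T ρ₀ m₀ lam : ℝ) (hT : 0 < T) (hρ₀ : 0 < ρ₀)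
    (hm₀ : 0 < m₀)
    (m a b ρ : ℝ → ℝ)
    (hρ : ∀ t ∈ Set.Iio T, ρ t = ρ₀ * T / (T - t))
    (hm : ∀ t ∈ Set.Iio T, m t = m₀ * (T / (T - t)) ^ (lam / 2 * ρ₀ * T))
    (ha : ∀ t ∈ Set.Iio T, a t = (m t / ρ t) ^ 2)
    (hb : ∀ t ∈ Set.Iio T, b t = -1 / (T - t)) :
    ∀ t ∈ Set.Ico (0:ℝ) T,
      HasDerivAt m (lam * (m t) ^ 2 / (2 * Real.sqrt (a t))) t ∧
      HasDerivAt a (2 * a t * b t + lam * m t * Real.sqrt (a t)) t ∧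
      deriv a t * b t + 2 * a t * deriv b t - lam * m t * Real.sqrt (a t) * b t = 0 := by
  rintro t ⟨-, htT⟩
  have hu : 0 < T - t := sub_pos.2 htT
  have hm_pos : 0 < m t := by
    have : 0 < T / (T - t) := div_pos hT hu
    rw [hm t htT]
    positivity
  have ha_sq : EqOn a (fun s => (m s * (T - s) / (ρ₀ * T)) ^ 2) (Iio T) := fun s hs => by
    have : 0 < T - s := sub_pos.2 hs
    rw [ha s hs, hρ s hs]
    field_simp
  have hsqrt : √(a t) = m t * (T - t) / (ρ₀ * T) := by
    rw [ha_sq htT, Real.sqrt_sq (by positivity)]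
  have hm' : HasDerivAt m (lam / 2 * ρ₀ * T / (T - t) * m t) t := by
    refine hasDerivAt_of_eqOn_Iio _ htT hm ?_
    rw [hm t htT, mul_left_comm]
    exact (hasDerivAt_div_sub_rpow _ hT.ne' hu.ne').const_mul m₀
  have ha' : HasDerivAt a (2 * a t * b t + lam * m t * √(a t)) t := by
    refine hasDerivAt_of_eqOn_Iio _ htT ha_sq ((hasDerivAt_sq_mul_sub_div _ hm').congr_deriv ?_)
    rw [hsqrt, ha_sq htT, hb t htT]
    field_simp
    ring
  have hb' : HasDerivAt b (-(b t) ^ 2) t := by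
    rw [hb t htT]
    exact hasDerivAt_of_eqOn_Iio _ htT hb (hasDerivAt_neg_one_div_sub hu.ne')
  refine ⟨hm'.congr_deriv ?_, ha', ?_⟩
  · rw [hsqrt]
    field_simp
  · rw [ha'.deriv, hb'.deriv]
    ring

/-- The explicit functions `m, a, b` satisfy the ODE system
`m' = λm²/(2√a)`, `a' = 2ab + λm√a`, `a'b + 2ab' - λm√a·b = 0` on `[0,T)`. -/
theorem explicit_solves_system (T ρ₀ m₀ lam : ℝ) (hT : 0 < T) (hρ₀ : 0 < ρ₀)
    (hm₀ : 0 < m₀) (hlam : 0 < lam)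
    (m a b ρ : ℝ → ℝ)
    (hρ : ∀ t ∈ Set.Iio T, ρ t = ρ₀ * T / (T - t))
    (hm : ∀ t ∈ Set.Iio T, m t = m₀ * (T / (T - t)) ^ (lam / 2 * ρ₀ * T))
    (ha : ∀ t ∈ Set.Iio T, a t = (m t / ρ t) ^ 2)
    (hb : ∀ t ∈ Set.Iio T, b t = -1 / (T - t)) :
    ∀ t ∈ Set.Ico (0:ℝ) T,
      HasDerivAt m (lam * (m t) ^ 2 / (2 * Real.sqrt (a t))) t ∧
      HasDerivAt a (2 * a t * b t + lam * m t * Real.sqrt (a t)) t ∧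
      deriv a t * b t + 2 * a t * deriv b t - lam * m t * Real.sqrt (a t) * b t = 0 :=
  explicit_solves_system_general T ρ₀ m₀ lam hT hρ₀ hm₀ m a b ρ hρ hm ha hb
end

section
/- Along solutions of the characteristic ODE Ẋ = V, V̇ = (λ/2)ρ(t)(b(t)X - V), where ρ(t) = ρ₀T/(T-t), b(t) = -1/(T-t), a(t) = (m(t)/ρ(t))² with m(t) = m₀(T/(T-t))^{(λ/2)ρ₀T}, the quantity α(t) = √(a(t))·(V(t) - b(t)X(t)) is constant in time. -/
/-!
Writing `c = (λ/2) ρ₀ T`, one has `√a = |m₀ / (ρ₀ T)| T^c (T - t)^(1 - c)` and `V - bX = (X + (T - t) V) / (T - t)`,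
so `α` is a constant multiple of `(T - t)^(-c) (X + (T - t) V)`. Along the flow, the extrapolated position
`X + (T - t) V` solves the linear equation `u' = -c u / (T - t)`, for which `(T - t)^(-c)` is an integrating factor.
-/

open Set Real

theorem eq_of_forall_hasDerivAt_zero_of_mem_Ico {E : Type*} [NormedAddCommGroup E] [NormedSpace ℝ E]
    {f : ℝ → E} {a b : ℝ} (hf : ∀ t ∈ Ico a b, HasDerivAt f 0 t) :
    ∀ t ∈ Ico a b, f t = f a := by
  intro t ht
  refine constant_of_has_deriv_right_zero (b := t) (fun s hs => ?_) (fun s hs => ?_) t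
    ⟨ht.1, le_rfl⟩
  · exact (hf s ⟨hs.1, hs.2.trans_lt ht.2⟩).continuousAt.continuousWithinAt
  · exact (hf s ⟨hs.1, hs.2.trans ht.2⟩).hasDerivWithinAt

theorem hasDerivAt_sub_rpow_neg_mul_eq_zero {u : ℝ → ℝ} {T c t : ℝ} (ht : t ≠ T)
    (hu : HasDerivAt u (-(c * u t) / (T - t)) t) :
    HasDerivAt (fun s => (T - s) ^ (-c) * u s) 0 t := by
  have hTt : T - t ≠ 0 := sub_ne_zero.2 ht.symm
  have hpow : HasDerivAt (fun s => (T - s) ^ (-c)) (-1 * -c * (T - t) ^ (-c - 1)) t :=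
    ((hasDerivAt_id t).const_sub T).rpow_const (Or.inl hTt)
  refine (hpow.mul hu).congr_deriv ?_
  rw [rpow_sub_one hTt]
  field_simp
  ring

def extrapolatedPosition (T : ℝ) (X V : ℝ → ℝ) (t : ℝ) : ℝ := X t + (T - t) * V t

theorem hasDerivAt_extrapolatedPosition {X V : ℝ → ℝ} {T c t : ℝ} (ht : t ≠ T)
    (hX : HasDerivAt X (V t) t) (hV : HasDerivAt V (c / (T - t) * (-1 / (T - t) * X t - V t)) t) :
    HasDerivAt (extrapolatedPosition T X V)
      (-(c * extrapolatedPosition T X V t) / (T - t)) t := by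
  have hTt : T - t ≠ 0 := sub_ne_zero.2 ht.symm
  refine (hX.add (((hasDerivAt_id t).const_sub T).mul hV)).congr_deriv ?_
  simp only [extrapolatedPosition, id]
  field_simp
  ring

theorem sqrt_sq_div_mul_sub_eq {T t : ℝ} (hT : 0 < T) (ht : t < T) (m₀ ρ₀ c v x : ℝ) :
    √((m₀ * (T / (T - t)) ^ c / (ρ₀ * T / (T - t))) ^ 2) * (v - -1 / (T - t) * x) =
      |m₀ / (ρ₀ * T)| * T ^ c * ((T - t) ^ (-c) * (x + (T - t) * v)) := by
  have hTt : 0 < T - t := sub_pos.2 ht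
  have hratio : m₀ * (T / (T - t)) ^ c / (ρ₀ * T / (T - t)) =
      m₀ / (ρ₀ * T) * T ^ c * ((T - t) ^ (-c) * (T - t)) := by
    rw [div_rpow hT.le hTt.le, rpow_neg hTt.le]
    field_simp
  rw [sqrt_sq_eq_abs, hratio, abs_mul, abs_mul, abs_of_pos (rpow_pos_of_pos hT c),
    abs_of_pos (mul_pos (rpow_pos_of_pos hTt _) hTt)]
  field_simp
  ring

theorem alpha_conserved_general (T ρ₀ m₀ lam : ℝ)
    (ρ b m a : ℝ → ℝ)
    (hρ : ∀ t ∈ Set.Iio T, ρ t = ρ₀ * T / (T - t))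
    (hb : ∀ t ∈ Set.Iio T, b t = -1 / (T - t))
    (hm : ∀ t ∈ Set.Iio T, m t = m₀ * (T / (T - t)) ^ (lam / 2 * ρ₀ * T))
    (ha : ∀ t ∈ Set.Iio T, a t = (m t / ρ t) ^ 2)
    (X V : ℝ → ℝ)
    (hX : ∀ t ∈ Set.Ico (0:ℝ) T, HasDerivAt X (V t) t)
    (hV : ∀ t ∈ Set.Ico (0:ℝ) T,
      HasDerivAt V (lam / 2 * ρ t * (b t * X t - V t)) t) :
    ∀ t ∈ Set.Ico (0:ℝ) T,
      Real.sqrt (a t) * (V t - b t * X t) =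
        Real.sqrt (a 0) * (V 0 - b 0 * X 0) := by
  intro t ht
  set c := lam / 2 * ρ₀ * T
  have hT : 0 < T := ht.1.trans_lt ht.2
  have hα : ∀ s ∈ Ico (0:ℝ) T, √(a s) * (V s - b s * X s) =
      |m₀ / (ρ₀ * T)| * T ^ c * ((T - s) ^ (-c) * extrapolatedPosition T X V s) := by
    intro s hs
    rw [ha s hs.2, hm s hs.2, hρ s hs.2, hb s hs.2]
    exact sqrt_sq_div_mul_sub_eq hT hs.2 m₀ ρ₀ c (V s) (X s)
  have hconst : ∀ s ∈ Ico (0:ℝ) T, HasDerivAt (fun r => (T - r) ^ (-c) *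
      extrapolatedPosition T X V r) 0 s := by
    intro s hs
    refine hasDerivAt_sub_rpow_neg_mul_eq_zero hs.2.ne
      (hasDerivAt_extrapolatedPosition hs.2.ne (hX s hs) ((hV s hs).congr_deriv ?_))
    rw [hρ s hs.2, hb s hs.2]
    ring
  rw [hα t ht, hα 0 ⟨le_rfl, hT⟩, eq_of_forall_hasDerivAt_zero_of_mem_Ico hconst t ht]

/-- Along the characteristic flow `Ẋ = V`, `V̇ = (λ/2)ρ(t)(b(t)X - V)` of the infinite-mass
self-similar solution, the quantity `α = √a (V - bX)` is conserved. -/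
theorem alpha_conserved (T ρ₀ m₀ lam : ℝ) (hT : 0 < T) (hρ₀ : 0 < ρ₀)
    (hm₀ : 0 < m₀) (hlam : 0 < lam)
    (ρ b m a : ℝ → ℝ)
    (hρ : ∀ t ∈ Set.Iio T, ρ t = ρ₀ * T / (T - t))
    (hb : ∀ t ∈ Set.Iio T, b t = -1 / (T - t))
    (hm : ∀ t ∈ Set.Iio T, m t = m₀ * (T / (T - t)) ^ (lam / 2 * ρ₀ * T))
    (ha : ∀ t ∈ Set.Iio T, a t = (m t / ρ t) ^ 2)
    (X V : ℝ → ℝ)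
    (hX : ∀ t ∈ Set.Ico (0:ℝ) T, HasDerivAt X (V t) t)
    (hV : ∀ t ∈ Set.Ico (0:ℝ) T,
      HasDerivAt V (lam / 2 * ρ t * (b t * X t - V t)) t) :
    ∀ t ∈ Set.Ico (0:ℝ) T,
      Real.sqrt (a t) * (V t - b t * X t) =
        Real.sqrt (a 0) * (V 0 - b 0 * X 0) :=
  alpha_conserved_general T ρ₀ m₀ lam ρ b m a hρ hb hm ha X V hX hV
end

section
/- Assume the super-critical condition k := (λ/2)ρ₀T > 1. If x < 0 and the velocity v satisfies -x/T < v ≤ -(x/T)·k, then the characteristic position X(t) = (T-t)[x/T + (α/(1-k))·((T/(T-t))^{1-k} - 1)] with α = v + x/T satisfies X(t) < 0 for all t ∈ (0,T). -/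
theorem add_mul_sub_one_neg {a c r : ℝ} (hc : c < 0) (hac : a ≤ c) (hr : 0 < r) :
    a + c * (r - 1) < 0 := by
  nlinarith [mul_neg_of_neg_of_pos hc hr]

theorem characteristic_stays_negative_general (T k x v α : ℝ) (hk : 1 < k)
    (hα : α = v + x / T)
    (hv1 : -x / T < v) (hv2 : v ≤ -(x / T) * k)
    (X : ℝ → ℝ)
    (hX : ∀ t ∈ Set.Ico (0:ℝ) T,
      X t = (T - t) * (x / T + α / (1 - k) * ((T / (T - t)) ^ (1 - k) - 1))) :
    ∀ t ∈ Set.Ioo (0:ℝ) T, X t < 0 := by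
  rintro t ⟨ht0, htT⟩
  have hα_pos : 0 < α := by rw [neg_div] at hv1; linarith
  have hk' : 1 - k < 0 := by linarith
  have hxα : x / T ≤ α / (1 - k) := by
    rw [le_div_iff_of_neg hk', hα]; linarith
  have hr : 0 < (T / (T - t)) ^ (1 - k) :=
    Real.rpow_pos_of_pos (div_pos (ht0.trans htT) (sub_pos.2 htT)) _
  rw [hX t ⟨ht0.le, htT⟩]
  exact mul_neg_of_pos_of_neg (sub_pos.2 htT)
    (add_mul_sub_one_neg (div_neg_of_pos_of_neg hα_pos hk') hxα hr)

/-- Super-critical case `k > 1`: if `x < 0` and `-x/T < v ≤ -(x/T)·k`, the characteristic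
position `X(t)` stays negative on `(0,T)`. -/
theorem characteristic_stays_negative (T k x v α : ℝ) (hT : 0 < T) (hk : 1 < k)
    (hx : x < 0) (hα : α = v + x / T)
    (hv1 : -x / T < v) (hv2 : v ≤ -(x / T) * k)
    (X : ℝ → ℝ)
    (hX : ∀ t ∈ Set.Ico (0:ℝ) T,
      X t = (T - t) * (x / T + α / (1 - k) * ((T / (T - t)) ^ (1 - k) - 1))) :
    ∀ t ∈ Set.Ioo (0:ℝ) T, X t < 0 :=
  characteristic_stays_negative_general T k x v α hk hα hv1 hv2 X hX
end

section
/- For the Gaussian profile φ(x) = (1/√(2π))e^{-x}, the function f(t,x,v) = m(t)φ(a(t)(v-b(t)x)²) satisfies the PDE ∂ₜf + v∂ₓf = (λ/2)ρ·∂ᵥ((v - u)f) with ρ = m/√a and u = bx, provided (m,a,b) solve m' = λm²/(2√a), a' = 2ab + λm√a, b' = -b². -/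
/-!
Write `f = m φ(Q)` with `φ = profile`, `z = v - b x` and `Q = a z²`. Since `φ' = -φ`,
`∂ₜ f + v ∂ₓ f = (m' - m (a' - 2ab) z²) φ(Q)`, the transport term `v ∂ₓ f` cancelling the
contribution of `b'` because `b' = -b²`, while `∂ᵥ((v - bx) f) = m (1 - 2a z²) φ(Q)`.
The ODEs for `m` and `a` turn the first coefficient into `(λ/2)(m/√a)` times the second.
-/

open Real

noncomputable section

namespace GaussianAnsatz

def profile (y : ℝ) : ℝ := 1 / √(2 * π) * exp (-y)

theorem hasDerivAt_profile (y : ℝ) : HasDerivAt profile (-profile y) y := by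
  have := (hasDerivAt_neg y).exp.const_mul (1 / √(2 * π))
  refine this.congr_deriv ?_
  simp only [profile]
  ring

def ansatz (m a b : ℝ → ℝ) (t x v : ℝ) : ℝ := m t * profile (a t * (v - b t * x) ^ 2)

variable {m a b : ℝ → ℝ}

theorem hasDerivAt_ansatz_time {t : ℝ} {m' a' b' : ℝ} (x v : ℝ) (hm : HasDerivAt m m' t)
    (ha : HasDerivAt a a' t) (hb : HasDerivAt b b' t) :
    HasDerivAt (fun τ => ansatz m a b τ x v)
      (m' * profile (a t * (v - b t * x) ^ 2) -
        (a' * (v - b t * x) ^ 2 - 2 * a t * (v - b t * x) * b' * x) * ansatz m a b t x v) t := by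
  have hQ := ha.fun_mul (((hb.mul_const x).const_sub v).fun_pow 2)
  refine (hm.mul ((hasDerivAt_profile _).comp t hQ)).congr_deriv ?_
  simp only [ansatz, Function.comp_apply]
  ring

theorem hasDerivAt_ansatz_space (t x v : ℝ) :
    HasDerivAt (fun y => ansatz m a b t y v)
      (2 * a t * b t * (v - b t * x) * ansatz m a b t x v) x := by
  have hQ := ((((hasDerivAt_id' x).const_mul (b t)).const_sub v).fun_pow 2).const_mul (a t)
  refine (((hasDerivAt_profile _).comp x hQ).const_mul (m t)).congr_deriv ?_
  simp only [ansatz]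
  ring

theorem hasDerivAt_sub_mul_ansatz_velocity (t x v : ℝ) :
    HasDerivAt (fun w => (w - b t * x) * ansatz m a b t x w)
      ((1 - 2 * a t * (v - b t * x) ^ 2) * ansatz m a b t x v) v := by
  have hz := (hasDerivAt_id' v).sub_const (b t * x)
  have hQ := (hz.fun_pow 2).const_mul (a t)
  refine (hz.mul (((hasDerivAt_profile _).comp v hQ).const_mul (m t))).congr_deriv ?_
  simp only [ansatz, Function.comp_apply]
  ring

end GaussianAnsatz

end

open GaussianAnsatz in
theorem ansatz_solves_pde_general (lam : ℝ) (s : Set ℝ)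
    (m a b : ℝ → ℝ) (ha_pos : ∀ t ∈ s, 0 < a t)
    (hm : ∀ t ∈ s, HasDerivAt m (lam * (m t) ^ 2 / (2 * Real.sqrt (a t))) t)
    (ha : ∀ t ∈ s, HasDerivAt a (2 * a t * b t + lam * m t * Real.sqrt (a t)) t)
    (hb : ∀ t ∈ s, HasDerivAt b (-(b t) ^ 2) t)
    (f : ℝ → ℝ → ℝ → ℝ)
    (hf : ∀ t x v, f t x v =
      m t * (1 / Real.sqrt (2 * Real.pi) * Real.exp (-(a t * (v - b t * x) ^ 2)))) :
    ∀ t ∈ s, ∀ x v : ℝ,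
      deriv (fun τ => f τ x v) t + v * deriv (fun y => f t y v) x =
        lam / 2 * (m t / Real.sqrt (a t)) *
          deriv (fun w => (w - b t * x) * f t x w) v := by
  intro t ht x v
  obtain rfl : f = ansatz m a b := by
    ext t x v
    exact hf t x v
  rw [(hasDerivAt_ansatz_time x v (hm t ht) (ha t ht) (hb t ht)).deriv,
    (hasDerivAt_ansatz_space t x v).deriv, (hasDerivAt_sub_mul_ansatz_velocity t x v).deriv]
  have hsqrt_pos : 0 < √(a t) := sqrt_pos.mpr (ha_pos t ht)
  have hsqrt_sq : √(a t) ^ 2 = a t := sq_sqrt (ha_pos t ht).le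
  simp only [ansatz]
  -- abstract `√(a t)` first, so that `← hsqrt_sq` only rewrites the `a t` outside the root
  generalize √(a t) = r at hsqrt_pos hsqrt_sq ⊢
  rw [← hsqrt_sq]
  field_simp
  ring

/-- With the Gaussian profile `φ(x) = (1/√(2π))e^{-x}`, the ansatz
`f(t,x,v) = m(t) φ(a(t)(v - b(t)x)²)` solves the PDE
`∂ₜ f + v ∂ₓ f = (λ/2) ρ ∂ᵥ((v - u) f)` with `ρ = m/√a`, `u = bx`, provided `(m,a,b)`
solve the ODE system `m' = λm²/(2√a)`, `a' = 2ab + λm√a`, `b' = -b²`. -/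
theorem ansatz_solves_pde (lam : ℝ) (hlam : 0 < lam) (s : Set ℝ)
    (m a b : ℝ → ℝ) (ha_pos : ∀ t ∈ s, 0 < a t) (hm_pos : ∀ t ∈ s, 0 < m t)
    (hm : ∀ t ∈ s, HasDerivAt m (lam * (m t) ^ 2 / (2 * Real.sqrt (a t))) t)
    (ha : ∀ t ∈ s, HasDerivAt a (2 * a t * b t + lam * m t * Real.sqrt (a t)) t)
    (hb : ∀ t ∈ s, HasDerivAt b (-(b t) ^ 2) t)
    (f : ℝ → ℝ → ℝ → ℝ)
    (hf : ∀ t x v, f t x v =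
      m t * (1 / Real.sqrt (2 * Real.pi) * Real.exp (-(a t * (v - b t * x) ^ 2)))) :
    ∀ t ∈ s, ∀ x v : ℝ,
      deriv (fun τ => f τ x v) t + v * deriv (fun y => f t y v) x =
        lam / 2 * (m t / Real.sqrt (a t)) *
          deriv (fun w => (w - b t * x) * f t x w) v :=
  ansatz_solves_pde_general lam s m a b ha_pos hm ha hb f hf
end
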